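/- arXiv:2305.01314 — 2 statements merged into one kernel-verified Lean document; each statement's English description precedes it below -/
import Mathlib

section
/- Let G be a connected finite simple graph and let X, Y ⊆ V(G) satisfy X ∪ Y = V(G), X ∩ Y = {v}, and no edge of G joins a vertex of X ∖ {v} to a vertex of Y ∖ {v}. Let S, T be disjoint nonempty vertex sets with (X ∖ Y) ∩ S ≠ ∅, X ∩ T = ∅, Y ∩ S ≠ ∅, and Y ∩ T ≠ ∅. Then for every natural number k, (G,S,T,k) is a yes-instance of Two-Sets Cut-Uncut if and only if (G[Y], (S ∖ X) ∪ {v}, T, k) is a yes-instance of Two-Sets Cut-Uncut. -/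
/-- The cut-set ∂(A): edges of `G` with exactly one endpoint in `A`. -/
def cutSet {V : Type*} (G : SimpleGraph V) (A : Set V) : Set (Sym2 V) :=
  {e | e ∈ G.edgeSet ∧ ∃ x y, e = s(x, y) ∧ x ∈ A ∧ y ∉ A}

/-- `x` and `y` lie in the same connected component of the induced subgraph `G[A]`:
there is a walk from `x` to `y` all of whose vertices lie in `A`. -/
def ReachableIn {V : Type*} (G : SimpleGraph V) (A : Set V) (x y : V) : Prop :=
  ∃ wlk : G.Walk x y, ∀ u ∈ wlk.support, u ∈ A

/-- `(G,S,T,k)` is a yes-instance of Two-Sets Cut-Uncut. -/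
def TwoSetsCutUncut {V : Type*} (G : SimpleGraph V) (S T : Set V) (k : ℕ) : Prop :=
  ∃ A B : Set V, A ∪ B = Set.univ ∧ A ∩ B = ∅ ∧ S ⊆ A ∧ T ⊆ B ∧
    (∀ x ∈ S, ∀ y ∈ S, ReachableIn G A x y) ∧
    (∀ x ∈ T, ∀ y ∈ T, ReachableIn G B x y) ∧
    (cutSet G A).ncard ≤ k

/-!
Since `S` meets both `X ∖ Y` and `Y` and is connected in `G[A]`, every solution `(A, B)` of the
instance on `G` has the cut vertex `v` on the `S`-side. Collapsing everything outside `Y` onto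
`v` maps walks to walks, so the trace of `(A, B)` on `Y` solves the instance on `G[Y]` with no
more cut edges. Conversely, a solution `(A', B')` on `G[Y]` extends by putting all of `X` on the
`S`-side: no cut edge leaves `Y`, and `S ∩ X` is joined to `v` inside `X` by collapsing `Y` onto
`v` in a walk of the connected graph `G`.
-/

open SimpleGraph Set

section

variable {V : Type*} {G : SimpleGraph V}

lemma twoSetsCutUncut_iff {S T : Set V} {k : ℕ} :
    TwoSetsCutUncut G S T k ↔ ∃ A : Set V, S ⊆ A ∧ T ⊆ Aᶜ ∧
      (∀ x ∈ S, ∀ y ∈ S, ReachableIn G A x y) ∧ (∀ x ∈ T, ∀ y ∈ T, ReachableIn G Aᶜ x y) ∧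
      (cutSet G A).ncard ≤ k := by
  constructor
  · rintro ⟨A, B, hU, hI, hSA, hTB, hS, hT, hk⟩
    obtain rfl : Aᶜ = B := (IsCompl.of_eq hI hU).compl_eq
    exact ⟨A, hSA, hTB, hS, hT, hk⟩
  · rintro ⟨A, hSA, hTA, hS, hT, hk⟩
    exact ⟨A, Aᶜ, union_compl_self A, inter_compl_self A, hSA, hTA, hS, hT, hk⟩

namespace ReachableIn

variable {A B : Set V} {x y z : V}

lemma left_mem (h : ReachableIn G A x y) : x ∈ A :=
  h.elim fun w hw => hw x w.start_mem_support

lemma refl (hx : x ∈ A) : ReachableIn G A x x :=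
  ⟨.nil, by simpa⟩

lemma of_adj (h : G.Adj x y) (hx : x ∈ A) (hy : y ∈ A) : ReachableIn G A x y :=
  ⟨h.toWalk, by simp [hx, hy]⟩

lemma symm (h : ReachableIn G A x y) : ReachableIn G A y x :=
  h.elim fun w hw => ⟨w.reverse, by simpa using hw⟩

lemma trans (h₁ : ReachableIn G A x y) (h₂ : ReachableIn G A y z) : ReachableIn G A x z := by
  obtain ⟨w₁, hw₁⟩ := h₁
  obtain ⟨w₂, hw₂⟩ := h₂
  refine ⟨w₁.append w₂, fun u hu => ?_⟩
  rcases Walk.mem_support_append_iff _ _ |>.1 hu with hu | hu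
  exacts [hw₁ u hu, hw₂ u hu]

lemma mono (h : ReachableIn G A x y) (hAB : A ⊆ B) : ReachableIn G B x y :=
  h.imp fun _ hw u hu => hAB (hw u hu)

lemma of_connected (hG : G.Connected) (x y : V) : ReachableIn G univ x y :=
  ⟨(hG.preconnected x y).some, fun _ _ => trivial⟩

lemma map (f : V → V) (hf : ∀ a b, G.Adj a b → f a = f b ∨ G.Adj (f a) (f b))
    (hA : MapsTo f A B) (h : ReachableIn G A x y) : ReachableIn G B (f x) (f y) := by
  obtain ⟨w, hw⟩ := h
  induction w with
  | nil => exact refl (hA (hw _ (List.mem_singleton_self _)))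
  | @cons a c b hac p ih =>
    have hstep : ReachableIn G B (f a) (f c) := by
      rcases hf a c hac with heq | hadj
      · exact heq ▸ refl (hA (hw a (by simp)))
      · exact of_adj hadj (hA (hw a (by simp))) (hA (hw c (by simp)))
    exact hstep.trans (ih fun u hu => hw u (by simp [hu]))

end ReachableIn

lemma reachableIn_induce_iff {Y A : Set V} {x y : Y} :
    ReachableIn (G.induce Y) (Subtype.val ⁻¹' A) x y ↔ ReachableIn G (A ∩ Y) x y := by
  constructor
  · rintro ⟨w, hw⟩
    refine ⟨w.map (Embedding.induce Y).toHom, fun u hu => ?_⟩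
    obtain ⟨c, hc, rfl⟩ := List.mem_map.1 (w.support_map (Embedding.induce Y).toHom ▸ hu)
    exact ⟨hw c hc, c.2⟩
  · rintro ⟨w, hw⟩
    exact ⟨w.induce Y fun u hu => (hw u hu).2, by simpa using fun u _ hu => (hw u hu).1⟩

lemma ncard_cutSet_induce_le [Finite V] (Y A : Set V) :
    (cutSet (G.induce Y) (Subtype.val ⁻¹' A)).ncard ≤ (cutSet G A).ncard := by
  rw [← ncard_image_of_injective _ (Sym2.map.injective Subtype.val_injective)]
  refine ncard_le_ncard ?_ (toFinite _)
  rintro _ ⟨_, ⟨hadj, a, b, rfl, ha, hb⟩, rfl⟩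
  exact ⟨hadj, a, b, rfl, ha, hb⟩

/-- With `X = Yᶜ ∪ {v}`, this is the separation `(X, Y)` of `G` at `v`. -/
def AttachedAt (G : SimpleGraph V) (Y : Set V) (v : V) : Prop :=
  ∀ ⦃x y⦄, G.Adj x y → x ∉ Y → y ∈ Y → y = v

namespace AttachedAt

variable {Y A B S T : Set V} {v a b x y : V} {k : ℕ}

lemma compl_insert (hY : AttachedAt G Y v) : AttachedAt G (insert v Yᶜ) v := by
  intro x y hxy hx hy
  simp only [mem_insert_iff, mem_compl_iff, not_or, not_not] at hx hy
  exact hy.resolve_right fun hyY => hx.1 (hY hxy.symm hyY hx.2)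

lemma mem_support (hY : AttachedAt G Y v) (w : G.Walk a b) (ha : a ∉ Y) (hb : b ∈ Y) :
    v ∈ w.support := by
  obtain ⟨d, hd, hd₁, hd₂⟩ := w.exists_boundary_dart Yᶜ ha (not_not.mpr hb)
  exact hY d.adj hd₁ (not_not.mp hd₂) ▸ w.dart_snd_mem_support_of_mem_darts hd

lemma reachableIn_of_notMem (hY : AttachedAt G Y v) (h : ReachableIn G A a b) (ha : a ∉ Y)
    (hb : b ∈ Y) : ReachableIn G A v b := by
  classical
  obtain ⟨w, hw⟩ := h
  have hv := hY.mem_support w ha hb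
  exact ⟨w.dropUntil v hv, fun u hu => hw u (w.support_dropUntil_subset_support hv hu)⟩

/-- Proved by collapsing every vertex outside `Y` onto `v`. -/
lemma reachableIn_inter (hY : AttachedAt G Y v) (hvY : v ∈ Y) (hvA : v ∈ A) (hx : x ∈ Y)
    (hy : y ∈ Y) (h : ReachableIn G A x y) : ReachableIn G (A ∩ Y) x y := by
  classical
  let f : V → V := fun u => if u ∈ Y then u else v
  have hf : ∀ a b, G.Adj a b → f a = f b ∨ G.Adj (f a) (f b) := by
    intro a b hab
    by_cases ha : a ∈ Y <;> by_cases hb : b ∈ Y <;> simp only [f, ha, hb, if_true, if_false]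
    · exact Or.inr hab
    · exact Or.inl (hY hab.symm hb ha)
    · exact Or.inl (hY hab ha hb).symm
    · simp
  have hfA : MapsTo f A (A ∩ Y) := fun u hu => by
    by_cases huY : u ∈ Y <;> simp [f, huY, hu, hvA, hvY]
  simpa [f, hx, hy] using h.map f hf hfA

lemma reachableIn_inter_of_notMem (hY : AttachedAt G Y v) (hvB : v ∉ B) (hx : x ∈ Y)
    (h : ReachableIn G B x y) : ReachableIn G (B ∩ Y) x y := by
  classical
  obtain ⟨w, hw⟩ := h
  refine ⟨w, fun u hu => ⟨hw u hu, ?_⟩⟩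
  by_contra huY
  have hv := hY.mem_support (w.takeUntil u hu).reverse huY hx
  rw [Walk.support_reverse, List.mem_reverse] at hv
  exact hvB (hw v (w.support_takeUntil_subset_support hu hv))

lemma ncard_cutSet_le_induce [Finite V] (hY : AttachedAt G Y v) (hYA : Yᶜ ⊆ A) (hvA : v ∈ A) :
    (cutSet G A).ncard ≤ (cutSet (G.induce Y) (Subtype.val ⁻¹' A)).ncard := by
  rw [← ncard_image_of_injective _ (Sym2.map.injective Subtype.val_injective)]
  refine ncard_le_ncard ?_ (toFinite _)
  rintro _ ⟨hadj, a, b, rfl, ha, hb⟩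
  have hab : G.Adj a b := hadj
  have hbY : b ∈ Y := not_not.mp fun h => hb (hYA h)
  have haY : a ∈ Y := not_not.mp fun h => hb (hY hab h hbY ▸ hvA)
  exact ⟨s(⟨a, haY⟩, ⟨b, hbY⟩), ⟨hadj, _, _, rfl, ha, hb⟩, rfl⟩

lemma twoSetsCutUncut_induce [Finite V] (hY : AttachedAt G Y v) (hvY : v ∈ Y)
    (hSout : (S \ Y).Nonempty) (hSin : (S ∩ Y).Nonempty) (h : TwoSetsCutUncut G S T k) :
    TwoSetsCutUncut (G.induce Y) (Subtype.val ⁻¹' (S ∪ {v})) (Subtype.val ⁻¹' T) k := by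
  rw [twoSetsCutUncut_iff] at h ⊢
  obtain ⟨A, hSA, hTA, hS, hT, hk⟩ := h
  obtain ⟨s₁, hs₁S, hs₁Y⟩ := hSout
  obtain ⟨s₂, hs₂S, hs₂Y⟩ := hSin
  have hv : ReachableIn G A v s₂ := hY.reachableIn_of_notMem (hS s₁ hs₁S s₂ hs₂S) hs₁Y hs₂Y
  have hvA : v ∈ A := hv.left_mem
  have hS' : ∀ x ∈ S ∪ {v}, ReachableIn G A x s₂ := by
    rintro x (hx | rfl)
    exacts [hS x hx s₂ hs₂S, hv]
  refine ⟨Subtype.val ⁻¹' A, preimage_mono (union_subset hSA (singleton_subset_iff.2 hvA)),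
    preimage_mono hTA, fun x hx y hy => ?_, fun x hx y hy => ?_,
    (ncard_cutSet_induce_le Y A).trans hk⟩
  · exact reachableIn_induce_iff.2 <|
      hY.reachableIn_inter hvY hvA x.2 y.2 ((hS' x hx).trans (hS' y hy).symm)
  · exact reachableIn_induce_iff.2 <|
      hY.reachableIn_inter_of_notMem (notMem_compl_iff.2 hvA) x.2 (hT x hx y hy)

lemma twoSetsCutUncut_of_induce [Finite V] (hG : G.Connected) (hY : AttachedAt G Y v)
    (hvY : v ∈ Y) (hTY : T ⊆ Y)
    (h : TwoSetsCutUncut (G.induce Y) (Subtype.val ⁻¹' (S ∪ {v})) (Subtype.val ⁻¹' T) k) :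
    TwoSetsCutUncut G S T k := by
  rw [twoSetsCutUncut_iff] at h ⊢
  obtain ⟨A', hSA', hTA', hS, hT, hk⟩ := h
  set A : Set V := (Subtype.val '' A'ᶜ)ᶜ
  have hA' : Subtype.val ⁻¹' A = A' := by
    rw [preimage_compl, preimage_image_eq _ Subtype.val_injective, compl_compl]
  have hYA : Yᶜ ⊆ A := fun u hu ⟨w, _, hw⟩ => hu (hw ▸ w.2)
  have hSA : S ∪ {v} ⊆ A := fun x hx => by
    by_cases hxY : x ∈ Y
    · exact (hA'.symm ▸ hSA' hx : (⟨x, hxY⟩ : Y) ∈ Subtype.val ⁻¹' A)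
    · exact hYA hxY
  have hvA : v ∈ A := hSA (Or.inr rfl)
  have hreach : ∀ x ∈ S, ReachableIn G A x v := by
    intro x hx
    by_cases hxY : x ∈ Y
    · have h' := hS ⟨x, hxY⟩ (Or.inl hx) ⟨v, hvY⟩ (Or.inr rfl)
      rw [← hA'] at h'
      exact (reachableIn_induce_iff.1 h').mono inter_subset_left
    · refine (hY.compl_insert.reachableIn_inter (mem_insert v _) (mem_univ v)
        (mem_insert_of_mem v hxY) (mem_insert v _) (.of_connected hG x v)).mono ?_
      rintro u ⟨-, rfl | hu⟩
      exacts [hvA, hYA hu]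
  refine ⟨A, subset_union_left.trans hSA, fun t ht => not_not.2 ⟨⟨t, hTY ht⟩, hTA' ht, rfl⟩,
    fun x hx y hy => (hreach x hx).trans (hreach y hy).symm, fun x hx y hy => ?_,
    (hY.ncard_cutSet_le_induce hYA hvA).trans (hA' ▸ hk)⟩
  have h' := hT ⟨x, hTY hx⟩ hx ⟨y, hTY hy⟩ hy
  rw [← hA', ← preimage_compl] at h'
  exact (reachableIn_induce_iff.1 h').mono inter_subset_left

end AttachedAt

end

theorem stmt14_general {V : Type*} [Fintype V] (G : SimpleGraph V) (hG : G.Connected)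
    (X Y : Set V) (v : V) (hXY : X ∪ Y = Set.univ) (hXYv : X ∩ Y = {v})
    (hsep : ∀ x ∈ X \ {v}, ∀ y ∈ Y \ {v}, ¬ G.Adj x y)
    (S T : Set V)
    (hXS : ((X \ Y) ∩ S).Nonempty) (hXT : X ∩ T = ∅)
    (hYS : (Y ∩ S).Nonempty) (k : ℕ) :
    TwoSetsCutUncut G S T k ↔
      TwoSetsCutUncut (G.induce Y)
        (Subtype.val ⁻¹' ((S \ X) ∪ {v})) (Subtype.val ⁻¹' T) k := by
  have hv : v ∈ X ∩ Y := hXYv ▸ rfl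
  have hmem : ∀ u, u ∈ X ∨ u ∈ Y := fun u => (Set.ext_iff.1 hXY u).2 (mem_univ u)
  have hY : AttachedAt G Y v := fun x y hxy hx hy => by
    by_contra hyv
    exact hsep x ⟨(hmem x).resolve_right hx, fun h => hx (h ▸ hv.2)⟩ y ⟨hy, hyv⟩ hxy
  have hTY : T ⊆ Y := fun t ht => (hmem t).resolve_left fun htX => hXT.subset ⟨htX, ht⟩
  have hSv : Subtype.val ⁻¹' ((S \ X) ∪ {v}) = (Subtype.val ⁻¹' (S ∪ {v}) : Set Y) := by
    ext ⟨x, hxY⟩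
    by_cases hxX : x ∈ X
    · have hxv : x = v := hXYv.subset ⟨hxX, hxY⟩
      simp [hxv]
    · simp [hxX]
  rw [hSv]
  exact ⟨hY.twoSetsCutUncut_induce hv.2 (hXS.mono fun x hx => ⟨hx.2, hx.1.2⟩)
      (hYS.mono fun x hx => ⟨hx.2, hx.1⟩),
    hY.twoSetsCutUncut_of_induce hG hv.2 hTY⟩

theorem stmt14 {V : Type*} [Fintype V] (G : SimpleGraph V) (hG : G.Connected)
    (X Y : Set V) (v : V) (hXY : X ∪ Y = Set.univ) (hXYv : X ∩ Y = {v})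
    (hsep : ∀ x ∈ X \ {v}, ∀ y ∈ Y \ {v}, ¬ G.Adj x y)
    (S T : Set V) (hS : S.Nonempty) (hT : T.Nonempty) (hST : Disjoint S T)
    (hXS : ((X \ Y) ∩ S).Nonempty) (hXT : X ∩ T = ∅)
    (hYS : (Y ∩ S).Nonempty) (hYT : (Y ∩ T).Nonempty) (k : ℕ) :
    TwoSetsCutUncut G S T k ↔
      TwoSetsCutUncut (G.induce Y)
        (Subtype.val ⁻¹' ((S \ X) ∪ {v})) (Subtype.val ⁻¹' T) k :=
  stmt14_general G hG X Y v hXY hXYv hsep S T hXS hXT hYS k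
end

section
/- Let G be a connected finite simple graph, let s ≠ t be vertices, let b be an edge of G with endpoints u and v such that {u, v} ∩ {s, t} = ∅, and let k be a natural number. Then G has a partition (U,W) of V(G) with s ∈ U, t ∈ W, both induced subgraphs G[U] and G[W] connected, b ∈ ∂(U), and |∂(U)| ≤ k + 1, if and only if (G, {s,u}, {t,v}, k+1) is a yes-instance of Two-Sets Cut-Uncut or (G, {s,v}, {t,u}, k+1) is a yes-instance of Two-Sets Cut-Uncut. -/
open SimpleGraph

section Aux
variable {V : Type*} {G : SimpleGraph V} {A B : Set V} {x y z : V}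

lemma reachableIn_refl (hx : x ∈ A) : ReachableIn G A x x :=
  ⟨SimpleGraph.Walk.nil, by simpa using hx⟩

lemma reachableIn_symm (h : ReachableIn G A x y) : ReachableIn G A y x := by
  obtain ⟨p, hp⟩ := h
  exact ⟨p.reverse, by simpa using hp⟩

lemma reachableIn_trans (h1 : ReachableIn G A x y) (h2 : ReachableIn G A y z) :
    ReachableIn G A x z := by
  obtain ⟨p, hp⟩ := h1; obtain ⟨q, hq⟩ := h2
  refine ⟨p.append q, fun w hw => ?_⟩
  rcases (Walk.mem_support_append_iff _ _).1 hw with h | h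
  exacts [hp _ h, hq _ h]

lemma reachableIn_mono (hAB : A ⊆ B) (h : ReachableIn G A x y) : ReachableIn G B x y := by
  obtain ⟨p, hp⟩ := h
  exact ⟨p, fun w hw => hAB (hp w hw)⟩

lemma reachableIn_snoc (h : ReachableIn G A x y) (hadj : G.Adj y z) (hz : z ∈ A) :
    ReachableIn G A x z := by
  have hy : y ∈ A := by obtain ⟨p, hp⟩ := h; exact hp _ p.end_mem_support
  refine reachableIn_trans h ⟨Walk.cons hadj Walk.nil, fun w hw => ?_⟩
  simp only [Walk.support_cons, Walk.support_nil, List.mem_cons,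
    List.not_mem_nil, or_false] at hw
  rcases hw with rfl | rfl
  exacts [hy, hz]

lemma reachableIn_left_mem (h : ReachableIn G A x y) : x ∈ A := by
  obtain ⟨p, hp⟩ := h; exact hp _ p.start_mem_support

lemma reachableIn_right_mem (h : ReachableIn G A x y) : y ∈ A := by
  obtain ⟨p, hp⟩ := h; exact hp _ p.end_mem_support

lemma induce_reachable : ∀ {x y : V} (p : G.Walk x y) (hp : ∀ z ∈ p.support, z ∈ A),
    (G.induce A).Reachable ⟨x, hp x p.start_mem_support⟩ ⟨y, hp y p.end_mem_support⟩
  | x, _, Walk.nil, hp => Reachable.refl _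
  | x, y, Walk.cons h q, hp => by
      have hx : x ∈ A := hp x (by simp)
      have hq : ∀ z ∈ q.support, z ∈ A := fun z hz => hp z (by simp [hz])
      have hadj : (G.induce A).Adj ⟨x, hx⟩ ⟨_, hq _ q.start_mem_support⟩ := h
      exact hadj.reachable.trans (induce_reachable q hq)

lemma reachableIn_of_induce (h : (G.induce A).Connected) (hx : x ∈ A) (hy : y ∈ A) :
    ReachableIn G A x y := by
  obtain ⟨p⟩ := h.preconnected ⟨x, hx⟩ ⟨y, hy⟩
  refine ⟨p.map ⟨Subtype.val, fun h => h⟩, fun z hz => ?_⟩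
  rw [Walk.support_map] at hz
  obtain ⟨⟨w, hw⟩, _, rfl⟩ := List.mem_map.1 hz
  exact hw

lemma cutSet_subset_compl (G : SimpleGraph V) (B : Set V) : cutSet G B ⊆ cutSet G Bᶜ := by
  rintro e ⟨he, x, y, rfl, hx, hy⟩
  exact ⟨he, y, x, Sym2.eq_swap.symm, hy, fun h => h hx⟩

lemma cutSet_compl (G : SimpleGraph V) (A : Set V) : cutSet G Aᶜ = cutSet G A :=
  subset_antisymm (by simpa using cutSet_subset_compl G Aᶜ) (cutSet_subset_compl G A)

/-- The set of vertices reachable from `s` inside `A` is connected, contained in `A`,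
closed under `G`-adjacency within `A`, and everything in it reaches `s` inside it. -/
lemma component_lemma (G : SimpleGraph V) (A : Set V) (s : V) (hs : s ∈ A) :
    {x | ReachableIn G A s x} ⊆ A ∧ s ∈ {x | ReachableIn G A s x} ∧
    (∀ x ∈ {x | ReachableIn G A s x}, ReachableIn G {x | ReachableIn G A s x} s x) ∧
    (G.induce {x | ReachableIn G A s x}).Connected ∧
    (∀ x ∈ {x | ReachableIn G A s x}, ∀ y, G.Adj x y → y ∈ A →
      y ∈ {x | ReachableIn G A s x}) := by
  classical
  set C := {x | ReachableIn G A s x} with hC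
  have hCA : C ⊆ A := fun x hx => reachableIn_right_mem hx
  have hsC : s ∈ C := reachableIn_refl hs
  have key : ∀ x ∈ C, ReachableIn G C s x := by
    rintro x ⟨p, hp⟩
    refine ⟨p, fun z hz => ?_⟩
    exact ⟨p.takeUntil z hz, fun w hw => hp w (Walk.support_takeUntil_subset p hz hw)⟩
  have hclosed : ∀ x ∈ C, ∀ y, G.Adj x y → y ∈ A → y ∈ C :=
    fun x hx y hadj hy => reachableIn_snoc hx hadj hy
  refine ⟨hCA, hsC, key, ?_, hclosed⟩
  haveI : Nonempty ↑C := ⟨⟨s, hsC⟩⟩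
  refine ⟨fun a b => ?_⟩
  obtain ⟨a, ha⟩ := a; obtain ⟨b, hb⟩ := b
  obtain ⟨p, hp⟩ := key a ha
  obtain ⟨q, hq⟩ := key b hb
  exact (induce_reachable p hp).symm.trans (induce_reachable q hq)

end Aux

lemma walk_claim {V : Type*} {G : SimpleGraph V} {C D : Set V} {s : V}
    (hsC : s ∈ C)
    (base : ∀ x ∈ C, ReachableIn G Dᶜ x s)
    (hclD : ∀ x ∈ D, ∀ y, G.Adj x y → y ∉ C → y ∈ D) :
    ∀ {x : V} (_ : G.Walk x s), x ∉ D → ReachableIn G Dᶜ x s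
  | x, Walk.nil, _ => base _ hsC
  | x, @Walk.cons _ _ _ b _ hab q, hxD => by
    by_cases hxC : x ∈ C
    · exact base x hxC
    · by_cases hbD : b ∈ D
      · exact absurd (hclD b hbD x hab.symm hxC) hxD
      · exact reachableIn_symm (reachableIn_snoc
          (reachableIn_symm (walk_claim hsC base hclD q hbD)) hab.symm hxD)

lemma backward_lemma {V : Type*} [Fintype V] {G : SimpleGraph V} (hG : G.Connected)
    {s t u v : V} (hb : G.Adj u v) {k : ℕ}
    (h : TwoSetsCutUncut G {s, u} {t, v} (k + 1)) :
    ∃ U W : Set V, U ∪ W = Set.univ ∧ U ∩ W = ∅ ∧ s ∈ U ∧ t ∈ W ∧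
      (G.induce U).Connected ∧ (G.induce W).Connected ∧
      s(u, v) ∈ cutSet G U ∧ (cutSet G U).ncard ≤ k + 1 := by
  obtain ⟨A, B, hUn, hInt, hSA, hTB, hSr, hTr, hcard⟩ := h
  have hsA : s ∈ A := hSA (by simp)
  have huA : u ∈ A := hSA (by simp)
  have htB : t ∈ B := hTB (by simp)
  have hvB : v ∈ B := hTB (by simp)
  have hBA : B = Aᶜ := by
    ext x
    constructor
    · intro hx hxA
      exact absurd (Set.mem_inter hxA hx) (by rw [hInt]; exact id)
    · intro hx
      rcases (Set.eq_univ_iff_forall.1 hUn x) with h | h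
      · exact absurd h hx
      · exact h
  -- C = component of s in A
  obtain ⟨hCA, hsC, keyC, hconnC, hclC⟩ := component_lemma G A s hsA
  set C := {x | ReachableIn G A s x} with hCdef
  have huC : u ∈ C := hSr s (by simp) u (by simp)
  have htW : t ∈ Cᶜ := fun htC => by
    have : t ∈ A ∩ B := ⟨hCA htC, htB⟩
    rw [hInt] at this; exact this
  -- D = component of t in Cᶜ
  obtain ⟨hDW, htD, keyD, hconnD, hclD⟩ := component_lemma G Cᶜ t htW
  set D := {x | ReachableIn G Cᶜ t x} with hDdef
  have hBW : B ⊆ Cᶜ := by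
    rw [hBA]; exact Set.compl_subset_compl.2 hCA
  have hvD : v ∈ D := reachableIn_mono hBW (hTr t (by simp) v (by simp))
  have hCU : C ⊆ Dᶜ := fun c hc hcD => hDW hcD hc
  have hsU : s ∈ Dᶜ := hCU hsC
  -- everything outside D reaches s inside Dᶜ
  have claim : ∀ (x : V), x ∉ D → ReachableIn G Dᶜ x s := by
    have base : ∀ x ∈ C, ReachableIn G Dᶜ x s :=
      fun x hx => reachableIn_symm (reachableIn_mono hCU (keyC x hx))
    intro x hxD
    obtain ⟨p⟩ := hG.preconnected x s
    exact walk_claim hsC base (fun a ha y hy hyC => hclD a ha y hy hyC) p hxD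
  have hconnU : (G.induce Dᶜ).Connected := by
    haveI : Nonempty ↑Dᶜ := ⟨⟨s, hsU⟩⟩
    refine ⟨fun a b => ?_⟩
    obtain ⟨a, ha⟩ := a; obtain ⟨b, hb⟩ := b
    obtain ⟨p, hp⟩ := claim a ha
    obtain ⟨q, hq⟩ := claim b hb
    exact (induce_reachable p hp).trans (induce_reachable q hq).symm
  -- cut bound
  have hsub : cutSet G D ⊆ cutSet G A := by
    rintro e ⟨he, x, y, rfl, hxD, hyD⟩
    have hadj : G.Adj x y := he
    have hyC : y ∈ C := by
      by_contra hyC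
      exact hyD (hclD x hxD y hadj hyC)
    have hxA : x ∉ A := by
      intro hxA
      exact hDW hxD (hclC y hyC x hadj.symm hxA)
    exact ⟨he, y, x, Sym2.eq_swap.symm, hCA hyC, hxA⟩
  have hcut : (cutSet G Dᶜ).ncard ≤ k + 1 := by
    rw [cutSet_compl]
    exact le_trans (Set.ncard_le_ncard hsub (Set.toFinite _)) hcard
  refine ⟨Dᶜ, D, ?_, ?_, hsU, htD, hconnU, hconnD, ?_, hcut⟩
  · simp
  · simp
  · exact ⟨hb, u, v, rfl, hCU huC, fun h => h hvD⟩
theorem stmt18 {V : Type*} [Fintype V] (G : SimpleGraph V) (hG : G.Connected)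
    (s t : V) (hst : s ≠ t) (u v : V) (hb : G.Adj u v)
    (hdisj : ({u, v} : Set V) ∩ {s, t} = ∅) (k : ℕ) :
    (∃ U W : Set V, U ∪ W = Set.univ ∧ U ∩ W = ∅ ∧ s ∈ U ∧ t ∈ W ∧
      (G.induce U).Connected ∧ (G.induce W).Connected ∧
      s(u, v) ∈ cutSet G U ∧ (cutSet G U).ncard ≤ k + 1) ↔
    (TwoSetsCutUncut G {s, u} {t, v} (k + 1) ∨
     TwoSetsCutUncut G {s, v} {t, u} (k + 1)) := by
  constructor
  · rintro ⟨U, W, hUn, hInt, hsU, htW, hcU, hcW, hmem, hcard⟩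
    obtain ⟨he, x, y, hxy, hxU, hyU⟩ := hmem
    have hWmem : ∀ z, z ∉ U → z ∈ W := fun z hz => by
      rcases Set.eq_univ_iff_forall.1 hUn z with h | h
      · exact absurd h hz
      · exact h
    rcases Sym2.eq_iff.1 hxy with ⟨rfl, rfl⟩ | ⟨rfl, rfl⟩
    · left
      have memU : ∀ a ∈ ({s, u} : Set V), a ∈ U := by
        rintro a (rfl | rfl) <;> assumption
      have memW : ∀ a ∈ ({t, v} : Set V), a ∈ W := by
        rintro a (rfl | rfl)
        · exact htW
        · exact hWmem _ hyU
      exact ⟨U, W, hUn, hInt, memU, memW,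
        fun a ha b hb => reachableIn_of_induce hcU (memU a ha) (memU b hb),
        fun a ha b hb => reachableIn_of_induce hcW (memW a ha) (memW b hb), hcard⟩
    · right
      have memU : ∀ a ∈ ({s, v} : Set V), a ∈ U := by
        rintro a (rfl | rfl) <;> assumption
      have memW : ∀ a ∈ ({t, u} : Set V), a ∈ W := by
        rintro a (rfl | rfl)
        · exact htW
        · exact hWmem _ hyU
      exact ⟨U, W, hUn, hInt, memU, memW,
        fun a ha b hb => reachableIn_of_induce hcU (memU a ha) (memU b hb),
        fun a ha b hb => reachableIn_of_induce hcW (memW a ha) (memW b hb), hcard⟩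
  · rintro (h | h)
    · exact backward_lemma hG hb h
    · obtain ⟨U, W, h1, h2, h3, h4, h5, h6, h7, h8⟩ := backward_lemma hG hb.symm h
      exact ⟨U, W, h1, h2, h3, h4, h5, h6, by rwa [Sym2.eq_swap], h8⟩
end
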